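/- (Lemma 4.6.) Let P be a finite set of points in the plane in convex position with radii r_p ≥ 0 and weights w_p, let S be a dominating set of the disk graph G(P), and let φ : 𝒜 → S be a Lemma-3.1 assignment with 𝒜 = ⟨α_1,…,α_m⟩. Suppose p_i ∈ S is a rank-t center of 𝒜[g,h] whose main sublist α_f lies in 𝒜[g,h] but is not an end sublist of 𝒜[g,h] (α_f ≠ α_g and α_f ≠ α_h), and the counterclockwise end sublist α_h belongs to 𝒜_{p_i}. Then there exists t' with 2 ≤ t' ≤ t − 1 such that p_i is a rank-t' center of 𝒜[f,h] and a rank-(t−t'+1) center of 𝒜[g,f]; furthermore, w(S[g,h]) = w(S[f,h]) + w(S[g,f]) − w_{p_i}. -/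

import Mathlib

noncomputable section

/-- The plane ℝ². -/
abbrev Plane : Type := EuclideanSpace ℝ (Fin 2)

/-- Two point sets `A` and `B` are line-separable: there is a nonzero linear functional
`u` and a constant `c` with `u ≤ c` on `A` and `u ≥ c` on `B`. -/
def LineSep (A B : Set Plane) : Prop :=
  ∃ u : Plane →ₗ[ℝ] ℝ, u ≠ 0 ∧ ∃ c : ℝ, (∀ a ∈ A, u a ≤ c) ∧ (∀ b ∈ B, c ≤ u b)

/-- The planar cross product (signed area determinant). -/
def det2 (u v : Plane) : ℝ := u 0 * v 1 - u 1 * v 0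

/-- `p : ZMod n → Plane` lists points in convex position in counterclockwise order:
every point other than `p i` and `p (i+1)` lies strictly to the left of the directed
line from `p i` to `p (i+1)`. -/
def CCWConvex {n : ℕ} (p : ZMod n → Plane) : Prop :=
  ∀ i j : ZMod n, j ≠ i → j ≠ i + 1 →
    0 < det2 (p (i + 1) - p i) (p j - p i)

/-- `S` is a dominating set of the disk graph on the points `p 0, …, p (n-1)` with
radii `r`: `S` is a set of these points, and the disk of every point intersects the
disk of some point of `S`. -/
def IsDominating {n : ℕ} (p : ZMod n → Plane) (r : Plane → ℝ) (S : Set Plane) : Prop :=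
  S ⊆ Set.range p ∧ ∀ q ∈ Set.range p, ∃ s ∈ S, dist q s ≤ r q + r s

/-- A partition of the cyclic point sequence `p 0, …, p (n-1)` into `m` nonempty
contiguous sublists `α_0, …, α_{m-1}` listed counterclockwise: the sublist `α_j`
consists of the `len j` consecutive points starting at cyclic position
`start + (sum of the lengths of the sublists before j)`. -/
structure SublistPartition (n m : ℕ) [NeZero m] where
  start : ZMod n
  len : ZMod m → ℕ
  len_pos : ∀ j, 0 < len j
  len_sum : ∑ j, len j = n

variable {n m : ℕ} [NeZero m]

/-- The cyclic position offset at which the sublist `α_j` starts. -/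
def SublistPartition.offset (A : SublistPartition n m) (j : ZMod m) : ℕ :=
  ∑ j' ∈ Finset.univ.filter (fun j' : ZMod m => j'.val < j.val), A.len j'

/-- The set of points of the sublist `α_j`. -/
def SublistPartition.block (A : SublistPartition n m) (p : ZMod n → Plane)
    (j : ZMod m) : Set Plane :=
  (fun t : ℕ => p (A.start + (A.offset j : ZMod n) + (t : ZMod n))) '' Set.Iio (A.len j)

/-- The group `𝒜_s` of a center `s`: the points of all sublists assigned to `s`. -/
def group (A : SublistPartition n m) (p : ZMod n → Plane) (φ : ZMod m → Plane)
    (s : Plane) : Set Plane :=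
  {x | ∃ j, φ j = s ∧ x ∈ A.block p j}

/-- `φ` is an assignment of the sublists of the partition `A` to points of `S`:
each sublist `α_j` is assigned a point `φ j ∈ S` whose disk intersects the disk
of every point of `α_j`. -/
def IsAssignment (A : SublistPartition n m) (p : ZMod n → Plane) (r : Plane → ℝ)
    (S : Set Plane) (φ : ZMod m → Plane) : Prop :=
  (∀ j, φ j ∈ S) ∧ ∀ j, ∀ x ∈ A.block p j, dist x (φ j) ≤ r x + r (φ j)

/-- A Lemma-3.1 assignment: an assignment that is line-separable, such that
(1) every `s ∈ S` lies in one of its own sublists (its main sublist), and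
(2) cyclically adjacent sublists are assigned to different points of `S`. -/
def IsLemma31Assignment (A : SublistPartition n m) (p : ZMod n → Plane) (r : Plane → ℝ)
    (S : Set Plane) (φ : ZMod m → Plane) : Prop :=
  IsAssignment A p r S φ ∧
  (∀ s ∈ S, ∀ s' ∈ S, s ≠ s' → LineSep (group A p φ s) (group A p φ s')) ∧
  (∀ s ∈ S, ∃ j, φ j = s ∧ s ∈ A.block p j) ∧
  (∀ j : ZMod m, j + 1 ≠ j → φ (j + 1) ≠ φ j)

/-- `Idx g h` is the set of indices of the sublists `α_g, α_{g+1}, …, α_h`, taken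
counterclockwise from `g` to `h` inclusive (so `Idx g g = {g}`). -/
def Idx {m : ℕ} [NeZero m] (g h : ZMod m) : Finset (ZMod m) :=
  (Finset.range ((h - g).val + 1)).image (fun t : ℕ => g + (t : ZMod m))

/-- `S[g,h]`: the points of `S` whose group contains some sublist of `𝒜[g,h]`. -/
def Scal {m : ℕ} [NeZero m] (S : Set Plane) (φ : ZMod m → Plane) (g h : ZMod m) :
    Set Plane :=
  {s | s ∈ S ∧ ∃ j ∈ Idx g h, φ j = s}

/-- Total weight of a set of points. -/
def wsum (w : Plane → ℝ) (T : Set Plane) : ℝ := ∑ᶠ x ∈ T, w x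

/-- `s` is a rank-`t` center for `𝒜[g,h]`: (i) `|S[g,h]| ≤ t`; (ii) `α_g` or `α_h`
belongs to the group of `s`; (iii) the main sublist of `s` belongs to `𝒜[g,h]`;
(iv) if `t > 1` every other point of `S[g,h]` has all its sublists in `𝒜[g,h]`,
and otherwise `s` itself has all its sublists in `𝒜[g,h]`. -/
def IsRankCenter (A : SublistPartition n m) (p : ZMod n → Plane) (S : Set Plane)
    (φ : ZMod m → Plane) (t : ℕ) (g h : ZMod m) (s : Plane) : Prop :=
  s ∈ S ∧
  (Scal S φ g h).ncard ≤ t ∧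
  (φ g = s ∨ φ h = s) ∧
  (∃ j ∈ Idx g h, φ j = s ∧ s ∈ A.block p j) ∧
  (1 < t → ∀ s' ∈ Scal S φ g h, s' ≠ s → ∀ j : ZMod m, φ j = s' → j ∈ Idx g h) ∧
  (t ≤ 1 → ∀ j : ZMod m, φ j = s → j ∈ Idx g h)

/-!
Splitting `𝒜[g,h]` at `α_f` gives `𝒜[g,f]` and `𝒜[f,h]`, which share only `α_f`. A center other
than `p_i` owning sublists on both sides would own sublists alternating with `α_f` and `α_h`
around the hull; but four points in convex position taken alternately from two sets cannot be
separated by a line, as the diagonals of a convex quadrilateral cross. Hence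
`S[g,f] ∩ S[f,h] = {p_i}`, and inclusion–exclusion gives the weight identity and
`|S[g,f]| + |S[f,h]| = |S[g,h]| + 1`. Each side has at least two centers, because the
neighbours `α_{f-1}` and `α_{f+1}` are not assigned to `p_i`; this bounds `t'`.
-/

theorem det2_smul_eq_add (x y v : Plane) : det2 x y • v = det2 v y • x + det2 x v • y := by
  ext i; fin_cases i <;> simp [det2] <;> ring

theorem det2_sub_sub_rotate (x y z : Plane) : det2 (y - x) (z - x) = det2 (z - y) (x - y) := by
  simp only [det2, PiLp.sub_apply]; ring

/-- Counterclockwise order is transitive among vectors in the half-plane `0 ≤ det2 v ·`. -/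
theorem det2_pos_trans {v a b c : Plane} (hva : 0 ≤ det2 v a) (hvb : 0 < det2 v b)
    (hvc : 0 < det2 v c) (hab : 0 < det2 a b) (hbc : 0 < det2 b c) : 0 < det2 a c := by
  have plucker : det2 a c * det2 v b = det2 a b * det2 v c + det2 v a * det2 b c := by
    simp only [det2]; ring
  have : 0 < det2 a c * det2 v b := by
    rw [plucker]; exact add_pos_of_pos_of_nonneg (mul_pos hab hvc) (mul_nonneg hva hbc.le)
  exact (mul_pos_iff_of_pos_right hvb).mp this

theorem LineSep.mono {A₁ A₂ B₁ B₂ : Set Plane} (h : LineSep A₂ B₂) (hA : A₁ ⊆ A₂)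
    (hB : B₁ ⊆ B₂) : LineSep A₁ B₁ := by
  obtain ⟨u, hu, c, hAc, hBc⟩ := h
  exact ⟨u, hu, c, fun a ha => hAc a (hA ha), fun b hb => hBc b (hB hb)⟩

theorem eq_zero_of_det2_ne_zero {u : Plane →ₗ[ℝ] ℝ} {x y : Plane} (hxy : det2 x y ≠ 0)
    (hx : u x = 0) (hy : u y = 0) : u = 0 := by
  ext v
  have h := congrArg u (det2_smul_eq_add x y v)
  simp only [map_add, map_smul, hx, hy, smul_eq_mul, mul_zero, add_zero] at h
  simpa [hxy] using h

/-- The diagonals `ac` and `bd` of a counterclockwise convex quadrilateral `abcd` cross. -/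
theorem not_lineSep_of_det2_pos {a b c d : Plane} (habc : 0 < det2 (b - a) (c - a))
    (habd : 0 < det2 (b - a) (d - a)) (hacd : 0 < det2 (c - a) (d - a))
    (hbcd : 0 < det2 (c - b) (d - b)) : ¬ LineSep {a, c} {b, d} := by
  rintro ⟨u, hu, k, hac, hbd⟩
  simp only [Set.mem_insert_iff, Set.mem_singleton_iff, forall_eq_or_imp, forall_eq] at hac hbd
  have hcramer := congrArg u (det2_smul_eq_add (b - a) (d - a) (c - a))
  simp only [map_add, map_smul, map_sub, smul_eq_mul] at hcramer
  have hbcd_eq : det2 (c - b) (d - b)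
      = det2 (c - a) (d - a) + det2 (b - a) (c - a) - det2 (b - a) (d - a) := by
    simp only [det2, PiLp.sub_apply]; ring
  rw [hbcd_eq] at hbcd
  have hua : u a = k := by nlinarith
  have hub : u b = k := by nlinarith
  have huc : u c = k := by nlinarith
  exact hu (eq_zero_of_det2_ne_zero habc.ne' (by simp [hua, hub]) (by simp [hua, huc]))

theorem natCast_ne_natCast {a b : ℕ} (ha : a < n) (hb : b < n) (hab : a ≠ b) :
    (a : ZMod n) ≠ b := by
  rwa [Ne, ZMod.natCast_eq_natCast_iff', Nat.mod_eq_of_lt ha, Nat.mod_eq_of_lt hb]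

namespace CCWConvex

variable {p : ZMod n → Plane}

theorem det2_pos_natCast (hp : CCWConvex p) (i : ZMod n) {k l : ℕ} (hk : k + 1 < n)
    (hl : l < n) (hlk : l ≠ k) (hlk' : l ≠ k + 1) :
    0 < det2 (p (i + (k + 1 : ℕ)) - p (i + k)) (p (i + l) - p (i + k)) := by
  have hsucc : i + ((k + 1 : ℕ) : ZMod n) = i + k + 1 := by push_cast; ring
  rw [hsucc]
  refine hp (i + k) (i + l) (fun h => ?_) (fun h => ?_)
  · exact natCast_ne_natCast hl (by omega) hlk (add_left_cancel h)
  · rw [← hsucc] at h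
    exact natCast_ne_natCast hl hk hlk' (add_left_cancel h)

theorem det2_pos_of_lt_of_lt (hp : CCWConvex p) (i : ZMod n) {b c : ℕ} (hb : 0 < b)
    (hbc : b < c) (hc : c < n) : 0 < det2 (p (i + b) - p i) (p (i + c) - p i) := by
  have hleft : ∀ {k : ℕ}, 2 ≤ k → k < n → 0 < det2 (p (i + 1) - p i) (p (i + k) - p i) :=
    fun h2 hk => by
      simpa using hp.det2_pos_natCast i (k := 0) (by omega) hk (by omega) (by omega)
  have hstep : ∀ {k : ℕ}, 0 < k → k + 1 < n →
      0 < det2 (p (i + k) - p i) (p (i + (k + 1 : ℕ)) - p i) := fun hk hk1 => by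
    rw [det2_sub_sub_rotate]
    simpa using hp.det2_pos_natCast i (l := 0) hk1 (by omega) (by omega) (by omega)
  induction c, hbc using Nat.le_induction with
  | base => exact hstep hb hc
  | succ c hbc ih =>
    refine det2_pos_trans (v := p (i + 1) - p i) ?_ (hleft (by omega) (by omega))
      (hleft (by omega) hc) (ih (by omega)) (hstep (by omega) hc)
    rcases (show b = 1 ∨ 2 ≤ b by omega) with rfl | hb2
    · simp [det2, mul_comm]
    · exact (hleft hb2 (by omega)).le

theorem det2_pos_of_lt (hp : CCWConvex p) (i : ZMod n) {a b c : ℕ} (hab : a < b) (hbc : b < c)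
    (hca : c < a + n) : 0 < det2 (p (i + b) - p (i + a)) (p (i + c) - p (i + a)) := by
  have h := hp.det2_pos_of_lt_of_lt (i + a) (b := b - a) (c := c - a) (by omega) (by omega)
    (by omega)
  have hshift : ∀ k, a ≤ k → i + a + ((k - a : ℕ) : ZMod n) = i + k := fun k hk => by
    rw [Nat.cast_sub hk]; ring
  rwa [hshift b hab.le, hshift c (by omega)] at h

theorem not_lineSep (hp : CCWConvex p) (i : ZMod n) {k₁ k₂ k₃ k₄ : ℕ} (h₁₂ : k₁ < k₂)
    (h₂₃ : k₂ < k₃) (h₃₄ : k₃ < k₄) (h₄₁ : k₄ < k₁ + n) :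
    ¬ LineSep {p (i + k₁), p (i + k₃)} {p (i + k₂), p (i + k₄)} :=
  not_lineSep_of_det2_pos (hp.det2_pos_of_lt i h₁₂ h₂₃ (by omega))
    (hp.det2_pos_of_lt i h₁₂ (h₂₃.trans h₃₄) h₄₁) (hp.det2_pos_of_lt i (h₁₂.trans h₂₃) h₃₄ h₄₁)
    (hp.det2_pos_of_lt i h₂₃ h₃₄ (by omega))

end CCWConvex

theorem sum_range_natCast {M : Type*} [AddCommMonoid M] (F : ZMod m → M) :
    ∑ k ∈ Finset.range m, F k = ∑ j, F j :=
  Finset.sum_nbij' (fun k => (k : ZMod m)) ZMod.val (by simp) (by simp [ZMod.val_lt])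
    (fun k hk => ZMod.val_cast_of_lt (Finset.mem_range.mp hk))
    (fun j _ => ZMod.natCast_zmod_val j) (fun _ _ => rfl)

namespace SublistPartition

variable (A : SublistPartition n m)

/-- The position at which `α_x` starts when the cyclic list of sublists is unrolled; the indices
`k < x` are read in `ZMod m`. -/
def cumLen (x : ℕ) : ℕ := ∑ k ∈ Finset.range x, A.len k

theorem cumLen_strictMono : StrictMono A.cumLen :=
  strictMono_nat_of_lt_succ fun x => by
    simp only [cumLen, Finset.sum_range_succ]
    exact Nat.lt_add_of_pos_right (A.len_pos x)

theorem cumLen_add_period (x : ℕ) : A.cumLen (x + m) = A.cumLen x + n := by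
  rw [cumLen, Finset.sum_range_add]
  congr 1
  push_cast
  rw [sum_range_natCast fun j : ZMod m => A.len (x + j)]
  exact (Equiv.sum_comp (Equiv.addLeft (x : ZMod m)) A.len).trans A.len_sum

theorem natCast_cumLen_mod (x : ℕ) : ((A.cumLen (x % m) : ℕ) : ZMod n) = A.cumLen x := by
  conv_rhs => rw [← Nat.mod_add_div x m]
  induction x / m with
  | zero => simp
  | succ q ih =>
    rw [Nat.mul_succ, ← add_assoc, cumLen_add_period, Nat.cast_add, ZMod.natCast_self,
      add_zero, ih]

theorem offset_eq_cumLen_val (j : ZMod m) : A.offset j = A.cumLen j.val :=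
  Finset.sum_nbij' ZMod.val (fun k => (k : ZMod m)) (by simp)
    (fun k hk => by
      have hk : k < j.val := Finset.mem_range.mp hk
      simp [ZMod.val_cast_of_lt (hk.trans (ZMod.val_lt j)), hk])
    (fun j _ => ZMod.natCast_zmod_val j)
    (fun k hk => ZMod.val_cast_of_lt ((Finset.mem_range.mp hk).trans (ZMod.val_lt j)))
    (fun j _ => by rw [ZMod.natCast_zmod_val])

theorem apply_start_add_cumLen_mem_block (p : ZMod n → Plane) (x : ℕ) :
    p (A.start + A.cumLen x) ∈ A.block p x :=
  ⟨0, A.len_pos _, by simp [offset_eq_cumLen_val, ZMod.val_natCast, natCast_cumLen_mod]⟩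

theorem not_lineSep_block {p : ZMod n → Plane} (hp : CCWConvex p) {x₁ x₂ x₃ x₄ : ℕ}
    (h₁₂ : x₁ < x₂) (h₂₃ : x₂ < x₃) (h₃₄ : x₃ < x₄) (h₄₁ : x₄ < x₁ + m) :
    ¬ LineSep (A.block p x₁ ∪ A.block p x₃) (A.block p x₂ ∪ A.block p x₄) := fun hsep =>
  hp.not_lineSep A.start (A.cumLen_strictMono h₁₂) (A.cumLen_strictMono h₂₃)
    (A.cumLen_strictMono h₃₄) (A.cumLen_add_period x₁ ▸ A.cumLen_strictMono h₄₁)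
    (hsep.mono
      (Set.pair_subset (Or.inl (A.apply_start_add_cumLen_mem_block p x₁))
        (Or.inr (A.apply_start_add_cumLen_mem_block p x₃)))
      (Set.pair_subset (Or.inl (A.apply_start_add_cumLen_mem_block p x₂))
        (Or.inr (A.apply_start_add_cumLen_mem_block p x₄))))

end SublistPartition

section Intervals

variable {g h f j : ZMod m}

theorem mem_Idx_iff : j ∈ Idx g h ↔ (j - g).val ≤ (h - g).val := by
  simp only [Idx, Finset.mem_image, Finset.mem_range]
  constructor
  · rintro ⟨k, hk, rfl⟩
    rw [add_sub_cancel_left, ZMod.val_cast_of_lt (by have := ZMod.val_lt (h - g); omega)]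
    omega
  · exact fun hj => ⟨(j - g).val, by omega, by rw [ZMod.natCast_zmod_val]; ring⟩

theorem self_mem_Idx_left : g ∈ Idx g h := by simp [mem_Idx_iff]

theorem self_mem_Idx_right : h ∈ Idx g h := mem_Idx_iff.mpr le_rfl

theorem add_one_mem_Idx (hgh : g ≠ h) : g + 1 ∈ Idx g h := by
  have hval : (h - g).val ≠ 0 := by rwa [Ne, ZMod.val_eq_zero, sub_eq_zero, eq_comm]
  simp only [Idx, Finset.mem_image, Finset.mem_range]
  exact ⟨1, by omega, by push_cast; rfl⟩

theorem sub_one_mem_Idx (hgh : g ≠ h) : h - 1 ∈ Idx g h := by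
  have hval : (h - g).val ≠ 0 := by rwa [Ne, ZMod.val_eq_zero, sub_eq_zero, eq_comm]
  simp only [Idx, Finset.mem_image, Finset.mem_range]
  exact ⟨(h - g).val - 1, by omega, by rw [Nat.cast_sub (by omega), ZMod.natCast_zmod_val]; ring⟩

theorem mem_Idx_iff_of_mem (hf : f ∈ Idx g h) :
    j ∈ Idx f h ↔ (f - g).val ≤ (j - g).val ∧ (j - g).val ≤ (h - g).val := by
  rw [mem_Idx_iff] at hf ⊢
  have hwrap : ∀ a b : ZMod m, (a + b).val = a.val + b.val ∨ (a + b).val + m = a.val + b.val :=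
    fun a b => (lt_or_ge (a.val + b.val) m).imp ZMod.val_add_of_lt
      fun hle => (ZMod.val_add_val_of_le hle).symm
  have hj := hwrap (j - f) (f - g)
  have hh := hwrap (h - f) (f - g)
  rw [sub_add_sub_cancel] at hj hh
  have := ZMod.val_lt (j - f)
  have := ZMod.val_lt (h - f)
  have := ZMod.val_lt (h - g)
  omega

theorem mem_Idx_iff_or (hf : f ∈ Idx g h) : j ∈ Idx g h ↔ j ∈ Idx g f ∨ j ∈ Idx f h := by
  rw [mem_Idx_iff_of_mem hf, mem_Idx_iff, mem_Idx_iff]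
  rw [mem_Idx_iff] at hf
  omega

end Intervals

section CentersOfIntervals

variable {S : Set Plane} {φ : ZMod m → Plane} {g h f : ZMod m}

theorem Scal_finite (S : Set Plane) (φ : ZMod m → Plane) (g h : ZMod m) :
    (Scal S φ g h).Finite :=
  (Set.finite_range φ).subset fun _ ⟨_, j, _, hj⟩ => ⟨j, hj⟩

theorem Scal_eq_union (hf : f ∈ Idx g h) : Scal S φ g h = Scal S φ g f ∪ Scal S φ f h := by
  ext s
  simp only [Scal, Set.mem_ofPred_eq, Set.mem_union, mem_Idx_iff_or hf, or_and_right, exists_or,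
    and_or_left]

theorem one_lt_ncard_Scal (hS : ∀ j, φ j ∈ S) {j j' : ZMod m} (hj : j ∈ Idx g h)
    (hj' : j' ∈ Idx g h) (hne : φ j ≠ φ j') : 1 < (Scal S φ g h).ncard :=
  (Set.one_lt_ncard (Scal_finite S φ g h)).mpr
    ⟨φ j, ⟨hS j, j, hj, rfl⟩, φ j', ⟨hS j', j', hj', rfl⟩, hne⟩

theorem Scal_inter_eq_singleton {p : ZMod n → Plane} (hp : CCWConvex p)
    (A : SublistPartition n m) (hS : ∀ j, φ j ∈ S)
    (hsep : ∀ s ∈ S, ∀ s' ∈ S, s ≠ s' → LineSep (group A p φ s) (group A p φ s'))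
    (hf : f ∈ Idx g h) (hφh : φ h = φ f) : Scal S φ g f ∩ Scal S φ f h = {φ f} := by
  refine Set.eq_singleton_iff_unique_mem.mpr
    ⟨⟨⟨hS f, f, self_mem_Idx_right, rfl⟩, hS f, f, self_mem_Idx_left, rfl⟩, ?_⟩
  rintro s ⟨⟨hsS, j₁, hj₁, rfl⟩, -, j₂, hj₂, hφj₂⟩
  by_contra hne
  have hj₁f : j₁ ≠ f := fun e => hne (by rw [e])
  have hj₂f : j₂ ≠ f := fun e => hne (by rw [← hφj₂, e])
  have hj₂h : j₂ ≠ h := fun e => hne (by rw [← hφj₂, e, hφh])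
  rw [mem_Idx_iff] at hj₁
  rw [mem_Idx_iff_of_mem hf] at hj₂
  have hval : ∀ {x y : ZMod m}, x ≠ y → (x - g).val ≠ (y - g).val :=
    fun hxy e => hxy (sub_left_injective (ZMod.val_injective m e))
  have hcast : ∀ x : ZMod m, ((g.val + (x - g).val : ℕ) : ZMod m) = x := fun x => by
    push_cast; rw [ZMod.natCast_zmod_val, ZMod.natCast_zmod_val]; ring
  have hinterleaved := A.not_lineSep_block hp (x₁ := g.val + (j₁ - g).val)
    (x₂ := g.val + (f - g).val) (x₃ := g.val + (j₂ - g).val) (x₄ := g.val + (h - g).val)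
    (by have := hval hj₁f; omega) (by have := hval hj₂f; omega)
    (by have := hval hj₂h; omega) (by have := ZMod.val_lt (h - g); omega)
  rw [hcast, hcast, hcast, hcast] at hinterleaved
  exact hinterleaved ((hsep _ hsS _ (hS f) hne).mono
    (Set.union_subset (fun x hx => ⟨j₁, rfl, hx⟩) (fun x hx => ⟨j₂, hφj₂, hx⟩))
    (Set.union_subset (fun x hx => ⟨f, rfl, hx⟩) (fun x hx => ⟨h, hφh, hx⟩)))

end CentersOfIntervals

theorem rank_center_decomposition_bidirectional_general {n m : ℕ} [NeZero m]
    (p : ZMod n → Plane) (hccw : CCWConvex p)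
    (r : Plane → ℝ) (w : Plane → ℝ)
    (S : Set Plane)
    (A : SublistPartition n m) (φ : ZMod m → Plane)
    (hφ : IsLemma31Assignment A p r S φ)
    (t : ℕ) (g h f : ZMod m) (pi : Plane)
    (hrank : IsRankCenter A p S φ t g h pi)
    (hfIdx : f ∈ Idx g h) (hfg : f ≠ g) (hfh : f ≠ h)
    (hmain : φ f = pi ∧ pi ∈ A.block p f)
    (hend : φ h = pi) :
    ∃ t' : ℕ, 2 ≤ t' ∧ t' ≤ t - 1 ∧
      IsRankCenter A p S φ t' f h pi ∧
      IsRankCenter A p S φ (t - t' + 1) g f pi ∧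
      wsum w (Scal S φ g h) =
        wsum w (Scal S φ f h) + wsum w (Scal S φ g f) - w pi := by
  obtain ⟨⟨hφS, -⟩, hsep, -, hadj⟩ := hφ
  obtain ⟨hpiS, hcard, -, -, hbig, -⟩ := hrank
  obtain ⟨rfl, hpi_mem⟩ := hmain
  have hunion : Scal S φ g h = Scal S φ g f ∪ Scal S φ f h := Scal_eq_union hfIdx
  have hinter := Scal_inter_eq_singleton hccw A hφS hsep hfIdx hend
  have hone : (1 : ZMod m) ≠ 0 := fun h10 =>
    hfg (@Subsingleton.elim _ (subsingleton_of_zero_eq_one h10.symm) f g)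
  have hright : 1 < (Scal S φ f h).ncard :=
    one_lt_ncard_Scal hφS (add_one_mem_Idx hfh) self_mem_Idx_left
      (hadj f fun e => hone (add_eq_left.mp e))
  have hleft : 1 < (Scal S φ g f).ncard := by
    refine one_lt_ncard_Scal hφS (sub_one_mem_Idx hfg.symm) self_mem_Idx_right fun e => ?_
    exact hadj (f - 1) (fun e' => hone (add_eq_left.mp e')) (by rw [sub_add_cancel, e])
  have hcount : (Scal S φ g h).ncard + 1 = (Scal S φ g f).ncard + (Scal S φ f h).ncard := by
    rw [hunion, ← Set.ncard_singleton (φ f), ← hinter]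
    exact Set.ncard_union_add_ncard_inter _ _ (Scal_finite S φ g f) (Scal_finite S φ f h)
  have ht : 1 < t := by omega
  have hown_right : ∀ s ∈ Scal S φ f h, s ≠ φ f → ∀ j, φ j = s → j ∈ Idx f h := by
    rintro s hs hsf j rfl
    refine ((mem_Idx_iff_or hfIdx).mp (hbig ht _ (hunion ▸ Or.inr hs) hsf j rfl)).resolve_left
      fun hj => hsf ?_
    exact hinter.subset ⟨⟨hs.1, j, hj, rfl⟩, hs⟩
  have hown_left : ∀ s ∈ Scal S φ g f, s ≠ φ f → ∀ j, φ j = s → j ∈ Idx g f := by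
    rintro s hs hsf j rfl
    refine ((mem_Idx_iff_or hfIdx).mp (hbig ht _ (hunion ▸ Or.inl hs) hsf j rfl)).resolve_right
      fun hj => hsf ?_
    exact hinter.subset ⟨hs, hs.1, j, hj, rfl⟩
  refine ⟨(Scal S φ f h).ncard, hright, by omega,
    ⟨hpiS, le_rfl, Or.inl rfl, ⟨f, self_mem_Idx_left, rfl, hpi_mem⟩, fun _ => hown_right,
      fun h1 => absurd h1 (by omega)⟩,
    ⟨hpiS, by omega, Or.inr rfl, ⟨f, self_mem_Idx_right, rfl, hpi_mem⟩, fun _ => hown_left,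
      fun h1 => absurd h1 (by omega)⟩, ?_⟩
  have hweight := finsum_mem_union_inter (f := w) (Scal_finite S φ g f) (Scal_finite S φ f h)
  rw [← hunion, hinter, finsum_mem_singleton] at hweight
  unfold wsum
  linarith

/-- **Lemma 4.6.** Suppose `p_i ∈ S` is a rank-`t` center of `𝒜[g,h]` whose main
sublist `α_f` lies in `𝒜[g,h]` but is not an end sublist of `𝒜[g,h]`, while the
counterclockwise end sublist `α_h` belongs to the group of `p_i`. Then there is `t'`
with `2 ≤ t' ≤ t - 1` such that `p_i` is a rank-`t'` center of `𝒜[f,h]` and a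
rank-`(t-t'+1)` center of `𝒜[g,f]`; moreover,
`w(S[g,h]) = w(S[f,h]) + w(S[g,f]) - w(p_i)`. -/
theorem rank_center_decomposition_bidirectional {n m : ℕ} [NeZero n] [NeZero m]
    (p : ZMod n → Plane) (hccw : CCWConvex p)
    (r : Plane → ℝ) (hr : ∀ i, 0 ≤ r (p i)) (w : Plane → ℝ)
    (S : Set Plane) (hS : IsDominating p r S)
    (A : SublistPartition n m) (φ : ZMod m → Plane)
    (hφ : IsLemma31Assignment A p r S φ)
    (t : ℕ) (g h f : ZMod m) (pi : Plane)
    (hrank : IsRankCenter A p S φ t g h pi)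
    (hfIdx : f ∈ Idx g h) (hfg : f ≠ g) (hfh : f ≠ h)
    (hmain : φ f = pi ∧ pi ∈ A.block p f)
    (hend : φ h = pi) :
    ∃ t' : ℕ, 2 ≤ t' ∧ t' ≤ t - 1 ∧
      IsRankCenter A p S φ t' f h pi ∧
      IsRankCenter A p S φ (t - t' + 1) g f pi ∧
      wsum w (Scal S φ g h) =
        wsum w (Scal S φ f h) + wsum w (Scal S φ g f) - w pi :=
  rank_center_decomposition_bidirectional_general p hccw r w S A φ hφ t g h f pi hrank hfIdx hfg hfh
    hmain hend

end
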